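/- (Theorem 2, per-element Gaussian differential privacy of the encoded model.) Let a ∈ ℝⁿ, c ∈ ℝ, σ̄ > 0, Δ > 0, ε > 0, and δ ≥ 0, and suppose there exists q ∈ ℝ such that Q(q) ≤ δ and σ̄² − σ̄ (‖a‖₂ Δ / ε) q − ‖a‖₂² Δ² / (2ε) ≥ 0, where Q(x) = γ₀,₁([x, ∞)) is the standard normal tail function and ‖a‖₂ the Euclidean norm. Then for all w, w′ ∈ ℝⁿ with ‖w − w′‖₂ ≤ Δ and every Borel set S ⊆ ℝ, the Gaussian measures with means aᵀw + c and aᵀw′ + c and common variance σ̄² satisfy γ_{aᵀw + c, σ̄²}(S) ≤ e^ε · γ_{aᵀw′ + c, σ̄²}(S) + δ; i.e., releasing a Gaussian value with mean aᵀw + c and standard deviation σ̄ is (ε, δ)-differentially private for inputs with ℓ₂-sensitivity Δ. -/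

import Mathlib

open MeasureTheory ProbabilityTheory Real Set
open scoped NNReal

/-- The standard normal tail function `Q(x) = γ₀,₁([x, ∞))`. -/
noncomputable def stdNormalTail (x : ℝ) : ℝ :=
  (gaussianReal 0 1 (Set.Ici x)).toReal

lemma gaussRepr (μ : ℝ) {σ : ℝ} (hσ : 0 < σ) :
    gaussianReal μ ⟨σ^2, sq_nonneg σ⟩ = (gaussianReal 0 1).map (fun x => σ * x + μ) := by
  have h1 : (gaussianReal 0 1).map (σ * ·) = gaussianReal 0 ⟨σ^2, sq_nonneg σ⟩ := by
    rw [gaussianReal_map_const_mul]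
    congr 1
    · simp
    · ext; simp; rfl
  have h2 : (fun x : ℝ => σ * x + μ) = (· + μ) ∘ (σ * ·) := rfl
  rw [h2, ← Measure.map_map (measurable_id'.add_const μ) (measurable_const_mul σ), h1]
  have h3 := gaussianReal_map_add_const (μ := 0) (v := ⟨σ^2, sq_nonneg σ⟩) μ
  rw [zero_add] at h3
  exact h3.symm

lemma gauss_Ici {σ : ℝ} (hσ : 0 < σ) (μ t : ℝ) :
    gaussianReal μ ⟨σ^2, sq_nonneg σ⟩ (Set.Ici t) = gaussianReal 0 1 (Set.Ici ((t - μ)/σ)) := by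
  rw [gaussRepr μ hσ, Measure.map_apply (by fun_prop) measurableSet_Ici]
  congr 1
  ext x
  simp only [Set.mem_preimage, Set.mem_Ici, div_le_iff₀ hσ]
  constructor <;> intro h <;> nlinarith

lemma stdNormal_symm : (gaussianReal 0 1).map (fun x : ℝ => -x) = gaussianReal 0 1 := by
  have h := gaussianReal_map_const_mul (μ := 0) (v := 1) (-1)
  simp only [neg_mul, one_mul, neg_zero] at h
  have h2 : (⟨(-1:ℝ)^2, sq_nonneg _⟩ : ℝ≥0) * 1 = 1 := by ext; norm_num
  convert h using 2
  exact h2.symm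

lemma gauss_Iic {σ : ℝ} (hσ : 0 < σ) (μ t : ℝ) :
    gaussianReal μ ⟨σ^2, sq_nonneg σ⟩ (Set.Iic t) = gaussianReal 0 1 (Set.Ici ((μ - t)/σ)) := by
  rw [gaussRepr μ hσ, Measure.map_apply (by fun_prop) measurableSet_Iic]
  have hpre : (fun x : ℝ => σ * x + μ) ⁻¹' Set.Iic t = Set.Iic ((t - μ)/σ) := by
    ext x
    simp only [Set.mem_preimage, Set.mem_Iic, le_div_iff₀ hσ]
    constructor <;> intro h <;> nlinarith
  rw [hpre, ← stdNormal_symm, Measure.map_apply measurable_neg measurableSet_Iic]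
  have : (fun x : ℝ => -x) ⁻¹' Set.Iic ((t - μ)/σ) = Set.Ici ((μ - t)/σ) := by
    ext x
    simp only [Set.mem_preimage, Set.mem_Iic, Set.mem_Ici, le_div_iff₀ hσ, div_le_iff₀ hσ]
    constructor <;> intro h <;> nlinarith
  rw [this, stdNormal_symm]

lemma gauss_dp_core {μ μ' σ ε δ q : ℝ} (hσ : 0 < σ) (hε : 0 < ε) (hδ : 0 ≤ δ)
    (hQ : stdNormalTail q ≤ δ)
    (hcond : 0 ≤ ε * σ^2 - σ * |μ - μ'| * q - (μ - μ')^2 / 2)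
    (S : Set ℝ) (hS : MeasurableSet S) :
    (gaussianReal μ ⟨σ^2, sq_nonneg σ⟩ S).toReal ≤
      Real.exp ε * (gaussianReal μ' ⟨σ^2, sq_nonneg σ⟩ S).toReal + δ := by
  set v : ℝ≥0 := ⟨σ^2, sq_nonneg σ⟩ with hv_def
  have hv : v ≠ 0 := by
    intro h
    have h2 : (v : ℝ) = 0 := by rw [h]; rfl
    have h3 : (v : ℝ) = σ^2 := rfl
    nlinarith
  set m := μ - μ' with hm_def
  set cst := ε * σ^2 - m^2/2 with hcst_def
  set B : Set ℝ := {x | cst < m * (x - μ)} with hB_def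
  have hB : MeasurableSet B := measurableSet_lt measurable_const (by fun_prop)
  have hpdf : ∀ x ∉ B, gaussianPDFReal μ v x ≤ Real.exp ε * gaussianPDFReal μ' v x := by
    intro x hx
    simp only [hB_def, Set.mem_setOf_eq, not_lt] at hx
    rw [gaussianPDFReal, gaussianPDFReal]
    have h3 : (v : ℝ) = σ^2 := rfl
    rw [h3]
    have key : Real.exp (-(x - μ)^2/(2*σ^2)) ≤
        Real.exp ε * Real.exp (-(x - μ')^2/(2*σ^2)) := by
      rw [← Real.exp_add, Real.exp_le_exp]
      have hσ2 : (0:ℝ) < 2*σ^2 := by positivity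
      rw [div_le_iff₀ hσ2, add_mul, div_mul_cancel₀ _ (ne_of_gt hσ2)]
      simp only [hcst_def, hm_def] at hx
      nlinarith [hx]
    nlinarith [mul_le_mul_of_nonneg_left key
      (by positivity : (0:ℝ) ≤ (√(2 * Real.pi * σ^2))⁻¹)]
  have key2 : (gaussianReal μ v (S ∩ Bᶜ)).toReal ≤ Real.exp ε * (gaussianReal μ' v S).toReal := by
    rw [gaussianReal_apply_eq_integral _ hv, gaussianReal_apply_eq_integral _ hv,
      ENNReal.toReal_ofReal (setIntegral_nonneg (hS.inter hB.compl)
        fun x _ => gaussianPDFReal_nonneg _ _ _),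
      ENNReal.toReal_ofReal (setIntegral_nonneg hS fun x _ => gaussianPDFReal_nonneg _ _ _)]
    calc ∫ x in S ∩ Bᶜ, gaussianPDFReal μ v x
        ≤ ∫ x in S ∩ Bᶜ, Real.exp ε * gaussianPDFReal μ' v x := by
          apply setIntegral_mono_on ((integrable_gaussianPDFReal μ v).integrableOn)
            (((integrable_gaussianPDFReal μ' v).const_mul _).integrableOn) (hS.inter hB.compl)
          intro x hx
          exact hpdf x hx.2
      _ = Real.exp ε * ∫ x in S ∩ Bᶜ, gaussianPDFReal μ' v x := integral_const_mul _ _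
      _ ≤ Real.exp ε * ∫ x in S, gaussianPDFReal μ' v x := by
          apply mul_le_mul_of_nonneg_left _ (Real.exp_nonneg ε)
          exact setIntegral_mono_set (integrable_gaussianPDFReal μ' v).integrableOn
            (ae_of_all _ fun x => gaussianPDFReal_nonneg _ _ _)
            (HasSubset.Subset.eventuallyLE Set.inter_subset_left)
  have key3 : (gaussianReal μ v B).toReal ≤ δ := by
    rcases lt_trichotomy m 0 with hm | hm | hm
    · -- m < 0
      have hsub : B ⊆ Set.Iic (μ + cst/m) := by
        intro x hx
        simp only [hB_def, Set.mem_setOf_eq] at hx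
        have h4 : x - μ < cst / m := by
          rw [lt_div_iff_of_neg hm]
          linarith [hx]
        simp only [Set.mem_Iic]
        linarith
      calc (gaussianReal μ v B).toReal
          ≤ (gaussianReal μ v (Set.Iic (μ + cst/m))).toReal :=
            ENNReal.toReal_mono (measure_ne_top _ _) (measure_mono hsub)
        _ = (gaussianReal 0 1 (Set.Ici ((μ - (μ + cst/m))/σ))).toReal := by
            rw [hv_def, gauss_Iic hσ]
        _ ≤ (gaussianReal 0 1 (Set.Ici q)).toReal := by
            apply ENNReal.toReal_mono (measure_ne_top _ _)
              (measure_mono (Set.Ici_subset_Ici.2 ?_))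
            have h5 : μ - (μ + cst/m) = cst/(-m) := by rw [div_neg]; ring
            rw [h5, div_div, le_div_iff₀ (mul_pos (neg_pos.2 hm) hσ)]
            have habs : |m| = -m := abs_of_neg hm
            rw [habs] at hcond
            rw [hcst_def]
            nlinarith [hcond]
        _ ≤ δ := hQ
    · -- m = 0
      have hBempty : B = ∅ := by
        ext x
        simp only [hB_def, Set.mem_setOf_eq, Set.mem_empty_iff_false, iff_false, not_lt, hm,
          zero_mul, hcst_def]
        nlinarith
      rw [hBempty]
      simpa using hδ
    · -- m > 0
      have hsub : B ⊆ Set.Ici (μ + cst/m) := by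
        intro x hx
        simp only [hB_def, Set.mem_setOf_eq] at hx
        have h4 : cst / m < x - μ := by
          rw [div_lt_iff₀ hm]
          linarith [hx]
        simp only [Set.mem_Ici]
        linarith
      calc (gaussianReal μ v B).toReal
          ≤ (gaussianReal μ v (Set.Ici (μ + cst/m))).toReal :=
            ENNReal.toReal_mono (measure_ne_top _ _) (measure_mono hsub)
        _ = (gaussianReal 0 1 (Set.Ici ((μ + cst/m - μ)/σ))).toReal := by
            rw [hv_def, gauss_Ici hσ]
        _ ≤ (gaussianReal 0 1 (Set.Ici q)).toReal := by
            apply ENNReal.toReal_mono (measure_ne_top _ _)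
              (measure_mono (Set.Ici_subset_Ici.2 ?_))
            have h5 : μ + cst/m - μ = cst/m := by ring
            rw [h5, div_div, le_div_iff₀ (by positivity : (0:ℝ) < m*σ)]
            have habs : |m| = m := abs_of_pos hm
            rw [habs] at hcond
            rw [hcst_def]
            nlinarith [hcond]
        _ ≤ δ := hQ
  have split : (gaussianReal μ v S).toReal ≤
      (gaussianReal μ v (S ∩ Bᶜ)).toReal + (gaussianReal μ v B).toReal := by
    rw [← ENNReal.toReal_add (measure_ne_top _ _) (measure_ne_top _ _)]
    apply ENNReal.toReal_mono (ENNReal.add_ne_top.2 ⟨measure_ne_top _ _, measure_ne_top _ _⟩)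
    refine le_trans (measure_mono ?_) (measure_union_le _ _)
    intro x hx
    by_cases hxB : x ∈ B
    · exact Or.inr hxB
    · exact Or.inl ⟨hx, hxB⟩
  linarith

/-- **Theorem 2: per-element Gaussian differential privacy of the encoded
model.** Suppose there is `q` with `Q(q) ≤ δ` and
`σ̄² − σ̄ (‖a‖₂ Δ/ε) q − ‖a‖₂² Δ²/(2ε) ≥ 0`, where `‖a‖₂ = √(Σⱼ aⱼ²)`. Then
for all inputs `w, w′` with `‖w − w′‖₂ ≤ Δ` and every Borel set `S`, the
Gaussian measures with means `aᵀw + c`, `aᵀw′ + c` and common variance `σ̄²`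
satisfy `γ_{aᵀw+c,σ̄²}(S) ≤ e^ε γ_{aᵀw′+c,σ̄²}(S) + δ`: releasing a Gaussian
value with mean `aᵀw + c` and standard deviation `σ̄` is
`(ε, δ)`-differentially private for ℓ₂-sensitivity `Δ`. -/
theorem gaussian_encoded_model_dp {n : ℕ} (a : Fin n → ℝ) (c : ℝ)
    (σ Δ ε δ : ℝ) (hσ : 0 < σ) (hΔ : 0 < Δ) (hε : 0 < ε) (hδ : 0 ≤ δ)
    (hq : ∃ q : ℝ, stdNormalTail q ≤ δ ∧
      σ ^ 2 - σ * (Real.sqrt (∑ j, (a j) ^ 2) * Δ / ε) * q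
        - (Real.sqrt (∑ j, (a j) ^ 2)) ^ 2 * Δ ^ 2 / (2 * ε) ≥ 0) :
    ∀ w w' : Fin n → ℝ, Real.sqrt (∑ j, (w j - w' j) ^ 2) ≤ Δ →
      ∀ S : Set ℝ, MeasurableSet S →
        (gaussianReal ((∑ j, a j * w j) + c) ⟨σ ^ 2, sq_nonneg σ⟩ S).toReal ≤
          Real.exp ε *
            (gaussianReal ((∑ j, a j * w' j) + c) ⟨σ ^ 2, sq_nonneg σ⟩ S).toReal
            + δ := by
  obtain ⟨q, hQ, hcond⟩ := hq
  intro w w' hww' S hS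
  set A := Real.sqrt (∑ j, (a j) ^ 2) with hA_def
  have hA0 : 0 ≤ A := Real.sqrt_nonneg _
  have hm_eq : ((∑ j, a j * w j) + c) - ((∑ j, a j * w' j) + c)
      = ∑ j, a j * (w j - w' j) := by
    simp only [mul_sub]
    rw [Finset.sum_sub_distrib]
    ring
  apply gauss_dp_core hσ hε hδ hQ ?_ S hS
  rw [hm_eq, ← sq_abs (∑ j, a j * (w j - w' j))]
  set t := |∑ j, a j * (w j - w' j)| with ht_def
  have ht0 : 0 ≤ t := abs_nonneg _
  have hcs : t ≤ A * Δ := by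
    have h1 : (∑ j, a j * (w j - w' j)) ^ 2 ≤
        (∑ j, (a j) ^ 2) * (∑ j, (w j - w' j) ^ 2) :=
      Finset.sum_mul_sq_le_sq_mul_sq _ _ _
    have h2 : t = Real.sqrt ((∑ j, a j * (w j - w' j)) ^ 2) :=
      (Real.sqrt_sq_eq_abs _).symm
    rw [h2]
    calc Real.sqrt ((∑ j, a j * (w j - w' j)) ^ 2)
        ≤ Real.sqrt ((∑ j, (a j) ^ 2) * (∑ j, (w j - w' j) ^ 2)) := Real.sqrt_le_sqrt h1
      _ = A * Real.sqrt (∑ j, (w j - w' j) ^ 2) := by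
          rw [hA_def, Real.sqrt_mul (Finset.sum_nonneg fun j _ => sq_nonneg _)]
      _ ≤ A * Δ := mul_le_mul_of_nonneg_left hww' hA0
  have hL : 0 ≤ ε * σ ^ 2 - σ * (A * Δ) * q - (A * Δ) ^ 2 / 2 := by
    have h4 : ε * σ ^ 2 - σ * (A * Δ) * q - (A * Δ) ^ 2 / 2
        = ε * (σ ^ 2 - σ * (A * Δ / ε) * q - A ^ 2 * Δ ^ 2 / (2 * ε)) := by
      field_simp
    rw [h4]
    exact mul_nonneg hε.le hcond
  rcases lt_or_eq_of_le ht0 with htpos | hteq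
  · have hLpos : 0 < A * Δ := lt_of_lt_of_le htpos hcs
    have key : 0 ≤ (A * Δ) * (ε * σ ^ 2 - σ * t * q - t ^ 2 / 2) := by
      nlinarith [mul_nonneg ht0 hL, mul_nonneg (sub_nonneg.2 hcs)
        (mul_pos hε (mul_pos hσ hσ)).le,
        mul_nonneg (mul_nonneg ht0 hLpos.le) (sub_nonneg.2 hcs)]
    exact (mul_nonneg_iff_of_pos_left hLpos).1 key
  · rw [← hteq]
    nlinarith [mul_pos hε (mul_pos hσ hσ)]
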